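/- arXiv:1405.5029 — 10 statements merged into one kernel-verified Lean document; each statement's English description precedes it below -/
import Mathlib

section
/- Let Λ be the thermal channel Λ(X) = Tr_R(U (ρ_R ⊗ X) U†) induced by an energy-conserving unitary U and a diagonal bath state ρ_R. Then for all indices i, j, k, l in Fin n, if H_S(k) − H_S(l) ≠ H_S(i) − H_S(j), then the (k,l) entry of Λ(E_{ij}) is zero, where E_{ij} is the matrix unit. (In other words, Λ(E_{ij}) is supported only on pairs (k,l) whose Bohr frequency E_k − E_l equals E_i − E_j.) -/
open Matrix Kronecker

/-- Partial trace over the reservoir `R`: `(Tr_R M)_{s,s'} = ∑_r M_{(r,s),(r,s')}`. -/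
noncomputable def ptrR {m n : ℕ} (M : Matrix (Fin m × Fin n) (Fin m × Fin n) ℂ) :
    Matrix (Fin n) (Fin n) ℂ :=
  Matrix.of fun s s' => ∑ r, M (r, s) (r, s')

/-!
For a diagonal Hamiltonian with spectrum `E`, say that a matrix `M` has Bohr frequency `ω` when
every nonzero entry `M p q` sits at a pair of levels with `E p - E q = ω`, i.e. `[H, M] = ω M`.
An energy-conserving unitary has frequency `0`, a diagonal bath state tensored with `E_{ij}` has
frequency `H_S i - H_S j`, and frequencies add under products, are negated by `ᴴ`, and survive
the partial trace over the bath because the bath energies cancel on its diagonal.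
-/

namespace Matrix

variable {ι κ R G : Type*} [AddCommGroup G]

def HasBohrFrequency [Zero R] (E : ι → G) (ω : G) (M : Matrix ι ι R) : Prop :=
  ∀ p q, M p q ≠ 0 → E p - E q = ω

namespace HasBohrFrequency

theorem single [DecidableEq ι] [Zero R] (E : ι → G) (i j : ι) (c : R) :
    HasBohrFrequency E (E i - E j) (Matrix.single i j c) := by
  intro p q hpq
  obtain ⟨rfl, rfl⟩ : i = p ∧ j = q := by
    by_contra h
    exact hpq (Matrix.single_apply_of_ne _ _ _ _ _ h)
  rfl

theorem diagonal [DecidableEq ι] [Zero R] (E : ι → G) (d : ι → R) :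
    HasBohrFrequency E 0 (Matrix.diagonal d) := by
  intro p q hpq
  obtain rfl : p = q := by
    by_contra h
    exact hpq (diagonal_apply_ne d h)
  exact sub_self _

theorem of_mul_diagonal_eq [Fintype ι] [DecidableEq ι] [CommRing R] [NoZeroDivisors R]
    {A : Matrix ι ι R} {d : ι → R} (h : A * Matrix.diagonal d = Matrix.diagonal d * A) :
    HasBohrFrequency d 0 A := by
  intro p q hpq
  have hentry : A p q * d q = d p * A p q := by
    simpa only [mul_diagonal, diagonal_mul] using congrFun (congrFun h p) q
  have : (d p - d q) * A p q = 0 := by linear_combination -hentry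
  exact (mul_eq_zero.mp this).resolve_right hpq

theorem mul [Fintype ι] [NonUnitalNonAssocSemiring R] {E : ι → G} {ω₁ ω₂ : G}
    {A B : Matrix ι ι R} (hA : HasBohrFrequency E ω₁ A) (hB : HasBohrFrequency E ω₂ B) :
    HasBohrFrequency E (ω₁ + ω₂) (A * B) := by
  intro p q hpq
  obtain ⟨r, -, hr⟩ := Finset.exists_ne_zero_of_sum_ne_zero hpq
  rw [← hA p r (left_ne_zero_of_mul hr), ← hB r q (right_ne_zero_of_mul hr),
    sub_add_sub_cancel]

theorem conjTranspose [AddMonoid R] [StarAddMonoid R] {E : ι → G} {ω : G}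
    {A : Matrix ι ι R} (hA : HasBohrFrequency E ω A) :
    HasBohrFrequency E (-ω) Aᴴ := by
  intro p q hpq
  rw [← hA q p (star_ne_zero.mp hpq), neg_sub]

theorem kronecker [MulZeroClass R] {E₁ : ι → G} {E₂ : κ → G} {ω₁ ω₂ : G}
    {A : Matrix ι ι R} {B : Matrix κ κ R} (hA : HasBohrFrequency E₁ ω₁ A)
    (hB : HasBohrFrequency E₂ ω₂ B) :
    HasBohrFrequency (fun p : ι × κ => E₁ p.1 + E₂ p.2) (ω₁ + ω₂) (A ⊗ₖ B) := by
  intro p q hpq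
  rw [kroneckerMap_apply] at hpq
  rw [add_sub_add_comm, hA _ _ (left_ne_zero_of_mul hpq), hB _ _ (right_ne_zero_of_mul hpq)]

end HasBohrFrequency

end Matrix

theorem Matrix.HasBohrFrequency.ptrR {m n : ℕ} {G : Type*} [AddCommGroup G]
    {E_R : Fin m → G} {E_S : Fin n → G} {ω : G}
    {M : Matrix (Fin m × Fin n) (Fin m × Fin n) ℂ}
    (hM : HasBohrFrequency (fun p => E_R p.1 + E_S p.2) ω M) :
    HasBohrFrequency E_S ω (ptrR M) := by
  intro k l hkl
  rw [_root_.ptrR, of_apply] at hkl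
  obtain ⟨r, -, hr⟩ := Finset.exists_ne_zero_of_sum_ne_zero hkl
  rw [← hM _ _ hr, add_sub_add_left_eq_sub]

theorem thermal_channel_bohr_support_general (m n : ℕ)
    (H_R : Fin m → ℝ) (H_S : Fin n → ℝ)
    (U : Matrix (Fin m × Fin n) (Fin m × Fin n) ℂ)
    (hUH : U * Matrix.diagonal (fun p => ((H_R p.1 + H_S p.2 : ℝ) : ℂ))
         = Matrix.diagonal (fun p => ((H_R p.1 + H_S p.2 : ℝ) : ℂ)) * U)
    (ρ : Fin m → ℝ)
    (Λ : Matrix (Fin n) (Fin n) ℂ → Matrix (Fin n) (Fin n) ℂ)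
    (hΛ : ∀ X, Λ X = ptrR (U * ((Matrix.diagonal fun r => ((ρ r : ℝ) : ℂ)) ⊗ₖ X) * Uᴴ))
    (i j k l : Fin n) (hfreq : H_S k - H_S l ≠ H_S i - H_S j) :
    Λ (Matrix.single i j 1) k l = 0 := by
  set E_R : Fin m → ℂ := fun r => (H_R r : ℂ)
  set E_S : Fin n → ℂ := fun s => (H_S s : ℂ)
  have hU : HasBohrFrequency (fun p => E_R p.1 + E_S p.2) 0 U := by
    simpa only [Complex.ofReal_add] using HasBohrFrequency.of_mul_diagonal_eq hUH
  have hX : HasBohrFrequency (fun p => E_R p.1 + E_S p.2) (E_S i - E_S j)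
      ((Matrix.diagonal fun r => ((ρ r : ℝ) : ℂ)) ⊗ₖ Matrix.single i j 1) := by
    simpa only [zero_add] using
      (HasBohrFrequency.diagonal E_R _).kronecker (HasBohrFrequency.single E_S i j 1)
  have hUXU : HasBohrFrequency (fun p => E_R p.1 + E_S p.2) (E_S i - E_S j)
      (U * ((Matrix.diagonal fun r => ((ρ r : ℝ) : ℂ)) ⊗ₖ Matrix.single i j 1) * Uᴴ) := by
    simpa only [zero_add, neg_zero, add_zero] using (hU.mul hX).mul hU.conjTranspose
  have hΛij : HasBohrFrequency E_S (E_S i - E_S j) (Λ (Matrix.single i j 1)) := by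
    rw [hΛ]
    exact hUXU.ptrR
  by_contra hkl
  exact hfreq (Complex.ofReal_injective (by push_cast; exact hΛij k l hkl))

/-- For the thermal channel `Λ(X) = Tr_R (U (ρ_R ⊗ X) U†)` induced by an
energy-conserving unitary `U` and a diagonal bath state `ρ_R`, the image of the
matrix unit `E_{ij}` is supported only on pairs `(k,l)` whose Bohr frequency
`H_S k − H_S l` equals `H_S i − H_S j`. -/
theorem thermal_channel_bohr_support (m n : ℕ) (hm : 1 ≤ m) (hn : 1 ≤ n)
    (H_R : Fin m → ℝ) (H_S : Fin n → ℝ)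
    (U : Matrix (Fin m × Fin n) (Fin m × Fin n) ℂ)
    (hU : U ∈ Matrix.unitaryGroup (Fin m × Fin n) ℂ)
    (hUH : U * Matrix.diagonal (fun p => ((H_R p.1 + H_S p.2 : ℝ) : ℂ))
         = Matrix.diagonal (fun p => ((H_R p.1 + H_S p.2 : ℝ) : ℂ)) * U)
    (ρ : Fin m → ℝ) (hρ : ∀ r, 0 ≤ ρ r) (hρ1 : ∑ r, ρ r = 1)
    (Λ : Matrix (Fin n) (Fin n) ℂ → Matrix (Fin n) (Fin n) ℂ)
    (hΛ : ∀ X, Λ X = ptrR (U * ((Matrix.diagonal fun r => ((ρ r : ℝ) : ℂ)) ⊗ₖ X) * Uᴴ))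
    (i j k l : Fin n) (hfreq : H_S k - H_S l ≠ H_S i - H_S j) :
    Λ (Matrix.single i j 1) k l = 0 :=
  thermal_channel_bohr_support_general m n H_R H_S U hUH ρ Λ hΛ i j k l hfreq
end

section
/- Let Λ be the thermal channel Λ(X) = Tr_R(U (ρ_R ⊗ X) U†) induced by an energy-conserving unitary U and a diagonal bath state ρ_R, and assume H_S has a non-degenerate Bohr spectrum. Then: (a) for every pair i ≠ j there exists a complex number λ_{ij} such that Λ(E_{ij}) = λ_{ij} • E_{ij}; and (b) for every i, the matrix Λ(E_{ii}) is diagonal. -/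
/-!
Grade matrices by Bohr frequency, the eigenvalues of `[H, ·]` for a diagonal Hamiltonian `H`.
Energy conservation puts `U` in degree `0`, so conjugation by `U` preserves the grading, as do
tensoring with the diagonal bath state and tracing out the bath. Hence `Λ(E_{ij})` has frequency
`H_S i - H_S j`, and a non-degenerate Bohr spectrum leaves room only for the `(i, j)` entry, or
only for diagonal entries when `i = j`.
-/

open Matrix Kronecker

/-- `X` is an eigenvector of `[diagonal E, ·]` with eigenvalue `ω` (or zero). -/
def IsBohrComponent {ι α G : Type*} [Zero α] [Sub G] (E : ι → G) (ω : G) (X : Matrix ι ι α) :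
    Prop :=
  ∀ p q, X p q ≠ 0 → E p - E q = ω

namespace IsBohrComponent

variable {ι κ α G : Type*} [AddCommGroup G] {E : ι → G}

theorem mul [Fintype ι] [NonUnitalNonAssocSemiring α] {ω₁ ω₂ : G} {X Y : Matrix ι ι α}
    (hX : IsBohrComponent E ω₁ X) (hY : IsBohrComponent E ω₂ Y) :
    IsBohrComponent E (ω₁ + ω₂) (X * Y) := by
  intro p q hpq
  obtain ⟨k, -, hk⟩ := Finset.exists_ne_zero_of_sum_ne_zero hpq
  rw [← hX p k (left_ne_zero_of_mul hk), ← hY k q (right_ne_zero_of_mul hk),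
    sub_add_sub_cancel]

theorem conjTranspose [AddMonoid α] [StarAddMonoid α] {ω : G} {X : Matrix ι ι α}
    (hX : IsBohrComponent E ω X) : IsBohrComponent E (-ω) Xᴴ := by
  intro p q hpq
  rw [← hX q p (by simpa [conjTranspose_apply] using hpq), neg_sub]

theorem kronecker_diagonal [DecidableEq κ] [MulZeroClass α] {ω : G} {X : Matrix ι ι α}
    (hX : IsBohrComponent E ω X) (c : κ → G) (a : κ → α) :
    IsBohrComponent (fun p : κ × ι => c p.1 + E p.2) ω (diagonal a ⊗ₖ X) := by
  rintro ⟨r, s⟩ ⟨r', s'⟩ h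
  rw [kroneckerMap_apply] at h
  obtain rfl : r = r' := by
    by_contra hr
    exact left_ne_zero_of_mul h (diagonal_apply_ne a hr)
  rw [add_sub_add_left_eq_sub, hX s s' (right_ne_zero_of_mul h)]

end IsBohrComponent

theorem isBohrComponent_single {ι α G : Type*} [DecidableEq ι] [Zero α] [Sub G] (E : ι → G)
    (i j : ι) (c : α) : IsBohrComponent E (E i - E j) (single i j c) := by
  intro p q h
  obtain ⟨rfl, rfl⟩ : i = p ∧ j = q := by
    by_contra hij
    exact h (single_apply_of_ne _ _ _ _ _ hij)
  rfl

theorem isBohrComponent_zero_of_commute_diagonal {ι : Type*} [Fintype ι] [DecidableEq ι]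
    (E : ι → ℝ) {U : Matrix ι ι ℂ}
    (hU : U * diagonal (fun p => (E p : ℂ)) = diagonal (fun p => (E p : ℂ)) * U) :
    IsBohrComponent E 0 U := by
  intro p q hpq
  have hentry := congrFun (congrFun hU p) q
  rw [mul_diagonal, diagonal_mul, mul_comm, mul_left_inj' hpq] at hentry
  exact sub_eq_zero.mpr (by exact_mod_cast hentry.symm)

theorem isBohrComponent_ptrR {m n : ℕ} {G : Type*} [AddCommGroup G] (c : Fin m → G)
    (E : Fin n → G) {ω : G} {M : Matrix (Fin m × Fin n) (Fin m × Fin n) ℂ}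
    (hM : IsBohrComponent (fun p => c p.1 + E p.2) ω M) : IsBohrComponent E ω (ptrR M) := by
  intro s s' h
  rw [ptrR, of_apply] at h
  obtain ⟨r, -, hr⟩ := Finset.exists_ne_zero_of_sum_ne_zero h
  simpa only [add_sub_add_left_eq_sub] using hM (r, s) (r, s') hr

section NondegenerateBohrSpectrum

variable {ι α G : Type*} [AddCommGroup G] {E : ι → G}

theorem IsBohrComponent.eq_smul_single [DecidableEq ι] [MulZeroOneClass α]
    (hinj : Function.Injective E)
    (hBohr : ∀ i j k l : ι, i ≠ j → k ≠ l → E i - E j = E k - E l → i = k ∧ j = l)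
    {i j : ι} (hij : i ≠ j) {X : Matrix ι ι α} (hX : IsBohrComponent E (E i - E j) X) :
    X = X i j • single i j 1 := by
  ext s s'
  by_cases hss' : s = i ∧ s' = j
  · obtain ⟨rfl, rfl⟩ := hss'
    simp
  · rw [Matrix.smul_apply, single_apply_of_ne _ _ _ _ _ (fun h => hss' ⟨h.1.symm, h.2.symm⟩),
      smul_zero]
    by_contra hne
    have hgap := hX s s' hne
    by_cases hs : s = s'
    · subst hs
      rw [sub_self] at hgap
      exact hij (hinj (sub_eq_zero.mp hgap.symm))
    · exact hss' (hBohr s s' i j hs hij hgap)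

theorem IsBohrComponent.isDiag [Zero α] (hinj : Function.Injective E) {X : Matrix ι ι α}
    (hX : IsBohrComponent E 0 X) : X.IsDiag := by
  intro s s' hss'
  by_contra hne
  exact hss' (hinj (sub_eq_zero.mp (hX s s' hne)))

end NondegenerateBohrSpectrum

theorem thermal_channel_block_diagonal_general (m n : ℕ)
    (H_R : Fin m → ℝ) (H_S : Fin n → ℝ)
    (hinj : Function.Injective H_S)
    (hBohr : ∀ i j k l : Fin n, i ≠ j → k ≠ l →
      H_S i - H_S j = H_S k - H_S l → i = k ∧ j = l)
    (U : Matrix (Fin m × Fin n) (Fin m × Fin n) ℂ)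
    (hUH : U * Matrix.diagonal (fun p => ((H_R p.1 + H_S p.2 : ℝ) : ℂ))
         = Matrix.diagonal (fun p => ((H_R p.1 + H_S p.2 : ℝ) : ℂ)) * U)
    (ρ : Fin m → ℝ)
    (Λ : Matrix (Fin n) (Fin n) ℂ → Matrix (Fin n) (Fin n) ℂ)
    (hΛ : ∀ X, Λ X = ptrR (U * ((Matrix.diagonal fun r => ((ρ r : ℝ) : ℂ)) ⊗ₖ X) * Uᴴ)) :
    (∀ i j : Fin n, i ≠ j → ∃ lam : ℂ,
        Λ (Matrix.single i j 1) = lam • Matrix.single i j 1) ∧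
    (∀ i : Fin n, (Λ (Matrix.single i i 1)).IsDiag) := by
  have hU : IsBohrComponent (fun p : Fin m × Fin n => H_R p.1 + H_S p.2) 0 U :=
    isBohrComponent_zero_of_commute_diagonal _ hUH
  have hΛ_single : ∀ i j, IsBohrComponent H_S (H_S i - H_S j) (Λ (single i j 1)) := by
    intro i j
    have hρX := (isBohrComponent_single H_S i j (1 : ℂ)).kronecker_diagonal H_R
      fun r => (ρ r : ℂ)
    have hconj := (hU.mul hρX).mul hU.conjTranspose
    rw [zero_add, neg_zero, add_zero] at hconj
    rw [hΛ]
    exact isBohrComponent_ptrR H_R H_S hconj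
  refine ⟨fun i j hij => ⟨_, (hΛ_single i j).eq_smul_single hinj hBohr hij⟩, fun i => ?_⟩
  exact (sub_self (H_S i) ▸ hΛ_single i i).isDiag hinj

/-- If `H_S` has a non-degenerate Bohr spectrum, then the thermal channel
`Λ(X) = Tr_R (U (ρ_R ⊗ X) U†)` is block-diagonal: (a) off-diagonal matrix units
are just damped, `Λ(E_{ij}) = λ_{ij} • E_{ij}` for `i ≠ j`; and (b) `Λ(E_{ii})`
is diagonal for every `i`. -/
theorem thermal_channel_block_diagonal (m n : ℕ) (hm : 1 ≤ m) (hn : 1 ≤ n)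
    (H_R : Fin m → ℝ) (H_S : Fin n → ℝ)
    (hinj : Function.Injective H_S)
    (hBohr : ∀ i j k l : Fin n, i ≠ j → k ≠ l →
      H_S i - H_S j = H_S k - H_S l → i = k ∧ j = l)
    (U : Matrix (Fin m × Fin n) (Fin m × Fin n) ℂ)
    (hU : U ∈ Matrix.unitaryGroup (Fin m × Fin n) ℂ)
    (hUH : U * Matrix.diagonal (fun p => ((H_R p.1 + H_S p.2 : ℝ) : ℂ))
         = Matrix.diagonal (fun p => ((H_R p.1 + H_S p.2 : ℝ) : ℂ)) * U)
    (ρ : Fin m → ℝ) (hρ : ∀ r, 0 ≤ ρ r) (hρ1 : ∑ r, ρ r = 1)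
    (Λ : Matrix (Fin n) (Fin n) ℂ → Matrix (Fin n) (Fin n) ℂ)
    (hΛ : ∀ X, Λ X = ptrR (U * ((Matrix.diagonal fun r => ((ρ r : ℝ) : ℂ)) ⊗ₖ X) * Uᴴ)) :
    (∀ i j : Fin n, i ≠ j → ∃ lam : ℂ,
        Λ (Matrix.single i j 1) = lam • Matrix.single i j 1) ∧
    (∀ i : Fin n, (Λ (Matrix.single i i 1)).IsDiag) :=
  thermal_channel_block_diagonal_general m n H_R H_S hinj hBohr U hUH ρ Λ hΛ
end

section
/- Let β ∈ ℝ, let ρ_R be the Gibbs state of H_R at inverse temperature β (the diagonal matrix with entries e^{−β H_R(r)} / Z_R where Z_R = Σ_r e^{−β H_R(r)}) and let τ_S be the Gibbs state of H_S (diagonal entries e^{−β H_S(s)} / Z_S with Z_S = Σ_s e^{−β H_S(s)}). Then the thermal channel Λ(X) = Tr_R(U (ρ_R ⊗ X) U†) induced by any energy-conserving unitary U preserves the Gibbs state: Λ(τ_S) = τ_S. -/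
open Matrix Kronecker

/-- The thermal channel `Λ(X) = Tr_R (U (ρ_R ⊗ X) U†)` induced by an
energy-conserving unitary `U` and the Gibbs bath state `ρ_R` at inverse
temperature `β` preserves the system Gibbs state: `Λ(τ_S) = τ_S`. -/
theorem thermal_channel_preserves_gibbs (m n : ℕ) (hm : 1 ≤ m) (hn : 1 ≤ n)
    (β : ℝ) (H_R : Fin m → ℝ) (H_S : Fin n → ℝ)
    (U : Matrix (Fin m × Fin n) (Fin m × Fin n) ℂ)
    (hU : U ∈ Matrix.unitaryGroup (Fin m × Fin n) ℂ)
    (hUH : U * Matrix.diagonal (fun p => ((H_R p.1 + H_S p.2 : ℝ) : ℂ))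
         = Matrix.diagonal (fun p => ((H_R p.1 + H_S p.2 : ℝ) : ℂ)) * U)
    (ρR : Matrix (Fin m) (Fin m) ℂ)
    (hρR : ρR = Matrix.diagonal fun r =>
      ((Real.exp (-β * H_R r) / ∑ r', Real.exp (-β * H_R r') : ℝ) : ℂ))
    (τS : Matrix (Fin n) (Fin n) ℂ)
    (hτS : τS = Matrix.diagonal fun s =>
      ((Real.exp (-β * H_S s) / ∑ s', Real.exp (-β * H_S s') : ℝ) : ℂ))
    (Λ : Matrix (Fin n) (Fin n) ℂ → Matrix (Fin n) (Fin n) ℂ)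
    (hΛ : ∀ X, Λ X = ptrR (U * (ρR ⊗ₖ X) * Uᴴ)) :
    Λ τS = τS := by
  have hne : Nonempty (Fin m) := ⟨⟨0, hm⟩⟩
  have hne' : Nonempty (Fin n) := ⟨⟨0, hn⟩⟩
  set ZR : ℝ := ∑ r', Real.exp (-β * H_R r') with hZR
  set ZS : ℝ := ∑ s', Real.exp (-β * H_S s') with hZS
  have hZRpos : 0 < ZR := Finset.sum_pos (fun _ _ => Real.exp_pos _) Finset.univ_nonempty
  have hZSpos : 0 < ZS := Finset.sum_pos (fun _ _ => Real.exp_pos _) Finset.univ_nonempty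
  have hZRne : ZR ≠ 0 := ne_of_gt hZRpos
  have hZSne : ZS ≠ 0 := ne_of_gt hZSpos
  set g : Fin m × Fin n → ℂ := fun p =>
    ((Real.exp (-β * (H_R p.1 + H_S p.2)) / (ZR * ZS) : ℝ) : ℂ) with hg
  -- step 1: Kronecker product is the diagonal of g
  have hkron : ρR ⊗ₖ τS = Matrix.diagonal g := by
    rw [hρR, hτS, Matrix.diagonal_kronecker_diagonal]
    ext p q
    simp only [Matrix.diagonal_apply, hg]
    split
    · rw [← Complex.ofReal_mul]
      congr 1
      rw [mul_add, Real.exp_add]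
      ring
    · rfl
  -- step 2: U commutes with diagonal g
  have hcomm : U * Matrix.diagonal g = Matrix.diagonal g * U := by
    ext p q
    simp only [Matrix.mul_diagonal, Matrix.diagonal_mul]
    by_cases h0 : U p q = 0
    · simp [h0]
    · have h1 := congrFun (congrFun hUH p) q
      simp only [Matrix.mul_diagonal, Matrix.diagonal_mul] at h1
      have h2 : ((H_R q.1 + H_S q.2 : ℝ) : ℂ) = ((H_R p.1 + H_S p.2 : ℝ) : ℂ) :=
        mul_left_cancel₀ h0 (by rw [h1, mul_comm])
      have h3 : H_R q.1 + H_S q.2 = H_R p.1 + H_S p.2 := by exact_mod_cast h2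
      simp only [hg, h3]
      ring
  -- step 3: conjugation fixes diagonal g
  have hconj : U * Matrix.diagonal g * Uᴴ = Matrix.diagonal g := by
    rw [hcomm, Matrix.mul_assoc]
    have : U * Uᴴ = 1 := (Matrix.mem_unitaryGroup_iff).mp hU
    rw [this, Matrix.mul_one]
  -- step 4: partial trace of the diagonal is τS
  rw [hΛ, hkron, hconj, hτS]
  ext s s'
  simp only [ptrR, Matrix.of_apply, Matrix.diagonal_apply, Prod.mk.injEq]
  by_cases hss : s = s'
  · subst hss
    simp only [and_true, if_true, eq_self_iff_true]
    have key : ∑ x : Fin m, Real.exp (-β * (H_R x + H_S s)) / (ZR * ZS)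
        = Real.exp (-β * H_S s) / ZS := by
      have h1 : ∀ x : Fin m, Real.exp (-β * (H_R x + H_S s))
          = Real.exp (-β * H_R x) * Real.exp (-β * H_S s) := fun x => by
        rw [← Real.exp_add]; ring_nf
      simp only [h1]
      rw [← Finset.sum_div, ← Finset.sum_mul, ← hZR]
      exact mul_div_mul_left _ _ hZRne
    simpa [hg] using (congrArg Complex.ofReal key)
  · simp [hss]
end

section
/- Let Λ be the thermal channel Λ(X) = Tr_R(U (ρ_R ⊗ X) U†) induced by an energy-conserving unitary U and a diagonal bath state ρ_R, and let D_S be the diagonal n×n matrix with diagonal entries H_S(s). Then Λ commutes with the superoperator X ↦ [D_S, X]: for every n×n complex matrix X, Λ(D_S X − X D_S) = D_S Λ(X) − Λ(X) D_S. -/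
open Matrix Kronecker

/-- The thermal channel `Λ(X) = Tr_R (U (ρ_R ⊗ X) U†)` commutes with the
superoperator `X ↦ [D_S, X]`, where `D_S` is the diagonal matrix of the system
Hamiltonian: `Λ(D_S X − X D_S) = D_S Λ(X) − Λ(X) D_S` for every `X`. -/
theorem thermal_channel_commutes_with_hamiltonian_superoperator
    (m n : ℕ) (hm : 1 ≤ m) (hn : 1 ≤ n)
    (H_R : Fin m → ℝ) (H_S : Fin n → ℝ)
    (U : Matrix (Fin m × Fin n) (Fin m × Fin n) ℂ)
    (hU : U ∈ Matrix.unitaryGroup (Fin m × Fin n) ℂ)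
    (hUH : U * Matrix.diagonal (fun p => ((H_R p.1 + H_S p.2 : ℝ) : ℂ))
         = Matrix.diagonal (fun p => ((H_R p.1 + H_S p.2 : ℝ) : ℂ)) * U)
    (ρ : Fin m → ℝ) (hρ : ∀ r, 0 ≤ ρ r) (hρ1 : ∑ r, ρ r = 1)
    (Λ : Matrix (Fin n) (Fin n) ℂ → Matrix (Fin n) (Fin n) ℂ)
    (hΛ : ∀ X, Λ X = ptrR (U * ((Matrix.diagonal fun r => ((ρ r : ℝ) : ℂ)) ⊗ₖ X) * Uᴴ))
    (DS : Matrix (Fin n) (Fin n) ℂ)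
    (hDS : DS = Matrix.diagonal fun s => ((H_S s : ℝ) : ℂ)) :
    ∀ X : Matrix (Fin n) (Fin n) ℂ,
      Λ (DS * X - X * DS) = DS * Λ X - Λ X * DS := by
  intro X
  set ρc : Matrix (Fin m) (Fin m) ℂ := Matrix.diagonal fun r => ((ρ r : ℝ) : ℂ) with hρc
  set H : Matrix (Fin m × Fin n) (Fin m × Fin n) ℂ :=
    Matrix.diagonal (fun p => ((H_R p.1 + H_S p.2 : ℝ) : ℂ)) with hH
  -- H commutes with Uᴴ
  have hHH : Hᴴ = H := by
    ext p q
    by_cases h : p = q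
    · subst h
      simp [hH, Matrix.conjTranspose_apply, Matrix.diagonal_apply_eq,
        Complex.star_def, Complex.conj_ofReal]
    · simp [hH, Matrix.conjTranspose_apply, Matrix.diagonal_apply_ne, h, Ne.symm h]
  have hHUH : H * Uᴴ = Uᴴ * H := by
    simpa [Matrix.conjTranspose_mul, hHH] using congrArg Matrix.conjTranspose hUH
  have key1 : ρc ⊗ₖ (DS * X - X * DS) = H * (ρc ⊗ₖ X) - (ρc ⊗ₖ X) * H := by
    ext ⟨r, s⟩ ⟨r', s'⟩
    simp only [Matrix.kronecker_apply, Matrix.sub_apply, hH, hDS, hρc,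
      Matrix.diagonal_mul, Matrix.mul_diagonal, Matrix.diagonal_apply]
    by_cases h : r = r'
    · subst h
      simp only [if_pos rfl]
      push_cast
      ring
    · simp [h]
  have key2 : U * (H * (ρc ⊗ₖ X) - (ρc ⊗ₖ X) * H) * Uᴴ
      = H * (U * (ρc ⊗ₖ X) * Uᴴ) - (U * (ρc ⊗ₖ X) * Uᴴ) * H := by
    have h1 : U * (H * (ρc ⊗ₖ X)) * Uᴴ = H * (U * (ρc ⊗ₖ X) * Uᴴ) := by
      simp only [← mul_assoc]; rw [hUH]
    have h2 : U * ((ρc ⊗ₖ X) * H) * Uᴴ = (U * (ρc ⊗ₖ X) * Uᴴ) * H := by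
      simp only [mul_assoc]; rw [hHUH]
    rw [mul_sub, sub_mul, h1, h2]
  have key3 : ∀ M : Matrix (Fin m × Fin n) (Fin m × Fin n) ℂ,
      ptrR (H * M - M * H) = DS * ptrR M - ptrR M * DS := by
    intro M
    ext s s'
    simp only [ptrR, Matrix.of_apply, Matrix.sub_apply, hH, hDS,
      Matrix.diagonal_mul, Matrix.mul_diagonal, Finset.sum_sub_distrib,
      Finset.mul_sum, Finset.sum_mul]
    rw [← Finset.sum_sub_distrib, ← Finset.sum_sub_distrib]
    apply Finset.sum_congr rfl
    intro r _
    push_cast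
    ring
  rw [hΛ, hΛ, key1, key2, key3]
end

section
/- (Damping Matrix Positivity.) Let Λ be a linear map on n×n complex matrices whose Choi matrix is positive semidefinite, and suppose Λ is block-diagonal: Λ(E_{ij}) = α_{ij} • E_{ij} for all i ≠ j, and Λ(E_{ii}) is diagonal for all i, with p(i→j) denoting the (j,j) entry of Λ(E_{ii}). Then the n×n damping matrix D with diagonal entries D_{ii} = p(i→i) and off-diagonal entries D_{ij} = α_{ij} (i ≠ j) is positive semidefinite. -/
open Matrix ComplexOrder

/-!
The damping matrix is the principal submatrix of the Choi matrix on the rows and columns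
`(i, i)`: its entries there are `Λ(E_{ij})_{ij}`, which is `p(i→i)` for `i = j` and `α_{ij}` for
`i ≠ j`. Principal submatrices of positive semidefinite matrices are positive semidefinite.
-/

section Choi

variable {ι R : Type*} [DecidableEq ι] [Ring R]

def choiMatrix (Λ : Matrix ι ι R →ₗ[R] Matrix ι ι R) : Matrix (ι × ι) (ι × ι) R :=
  Matrix.of fun p q => Λ (single p.1 q.1 1) p.2 q.2

theorem choiMatrix_submatrix_diag (Λ : Matrix ι ι R →ₗ[R] Matrix ι ι R) :
    (choiMatrix Λ).submatrix (fun i => (i, i)) (fun i => (i, i)) =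
      Matrix.of fun i j => Λ (single i j 1) i j :=
  rfl

theorem posSemidef_of_posSemidef_choiMatrix [Fintype ι] [PartialOrder R] [StarRing R]
    {Λ : Matrix ι ι R →ₗ[R] Matrix ι ι R} (hΛ : (choiMatrix Λ).PosSemidef) :
    (Matrix.of fun i j => Λ (single i j 1) i j).PosSemidef :=
  choiMatrix_submatrix_diag Λ ▸ hΛ.submatrix _

end Choi

theorem damping_matrix_posSemidef_general (n : ℕ)
    (Λ : Matrix (Fin n) (Fin n) ℂ →ₗ[ℂ] Matrix (Fin n) (Fin n) ℂ)
    (hChoi : Matrix.PosSemidef (Matrix.of fun p q : Fin n × Fin n =>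
      Λ (Matrix.single p.1 q.1 1) p.2 q.2))
    (α : Fin n → Fin n → ℂ)
    (hα : ∀ i j : Fin n, i ≠ j →
      Λ (Matrix.single i j 1) = α i j • Matrix.single i j 1) :
    Matrix.PosSemidef (Matrix.of fun i j : Fin n =>
      if i = j then Λ (Matrix.single i i 1) i i else α i j) := by
  have hdamping : (Matrix.of fun i j : Fin n =>
      if i = j then Λ (Matrix.single i i 1) i i else α i j) =
        Matrix.of fun i j => Λ (single i j 1) i j := by
    ext i j
    by_cases hij : i = j
    · simp [hij]
    · simp [hij, hα i j hij]
  exact hdamping ▸ posSemidef_of_posSemidef_choiMatrix hChoi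

/-- **Damping Matrix Positivity.** If a linear map `Λ` on `n×n` complex matrices has a
positive semidefinite Choi matrix and is block-diagonal (`Λ(E_{ij}) = α_{ij} • E_{ij}` for
`i ≠ j`, and `Λ(E_{ii})` diagonal), then the damping matrix, with diagonal entries
`p(i→i) = (Λ(E_{ii}))_{ii}` and off-diagonal entries `α_{ij}`, is positive semidefinite. -/
theorem damping_matrix_posSemidef (n : ℕ)
    (Λ : Matrix (Fin n) (Fin n) ℂ →ₗ[ℂ] Matrix (Fin n) (Fin n) ℂ)
    (hChoi : Matrix.PosSemidef (Matrix.of fun p q : Fin n × Fin n =>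
      Λ (Matrix.single p.1 q.1 1) p.2 q.2))
    (α : Fin n → Fin n → ℂ)
    (hα : ∀ i j : Fin n, i ≠ j →
      Λ (Matrix.single i j 1) = α i j • Matrix.single i j 1)
    (hdiag : ∀ i : Fin n, (Λ (Matrix.single i i 1)).IsDiag) :
    Matrix.PosSemidef (Matrix.of fun i j : Fin n =>
      if i = j then Λ (Matrix.single i i 1) i i else α i j) :=
  damping_matrix_posSemidef_general n Λ hChoi α hα
end

section
/- Let Λ be a linear map on n×n complex matrices whose Choi matrix is positive semidefinite, and suppose Λ is block-diagonal with off-diagonal damping factors α_{ij} and transition probabilities p(i→j). Then for all i ≠ j, |α_{ij}|² ≤ p(i→i) · p(j→j); i.e., the coherences must be damped at least by the factor √(p(i→i) p(j→j)). -/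
open Matrix ComplexOrder

theorem Matrix.PosSemidef.norm_apply_sq_le {n 𝕜 : Type*} [Fintype n] [RCLike 𝕜]
    {A : Matrix n n 𝕜} (hA : A.PosSemidef) (i j : n) :
    ‖A i j‖ ^ 2 ≤ RCLike.re (A i i) * RCLike.re (A j j) := by
  have hdet := (hA.submatrix ![i, j]).det_nonneg
  have hji : A j i = star (A i j) := by rw [← hA.isHermitian.apply i j]; simp
  have hdiag : ∀ k, (RCLike.re (A k k) : 𝕜) = A k k := fun k =>
    RCLike.conj_eq_iff_re.mp (hA.isHermitian.apply k k)
  rw [det_fin_two] at hdet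
  simp only [submatrix_apply, cons_val_zero, cons_val_one, hji, RCLike.star_def,
    RCLike.mul_conj] at hdet
  rwa [← hdiag i, ← hdiag j, ← RCLike.ofReal_pow, ← RCLike.ofReal_mul, ← RCLike.ofReal_sub,
    RCLike.ofReal_nonneg, sub_nonneg] at hdet

theorem damping_factor_bound_general (n : ℕ)
    (Λ : Matrix (Fin n) (Fin n) ℂ →ₗ[ℂ] Matrix (Fin n) (Fin n) ℂ)
    (hChoi : Matrix.PosSemidef (Matrix.of fun p q : Fin n × Fin n =>
      Λ (Matrix.single p.1 q.1 1) p.2 q.2))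
    (α : Fin n → Fin n → ℂ)
    (hα : ∀ i j : Fin n, i ≠ j →
      Λ (Matrix.single i j 1) = α i j • Matrix.single i j 1) :
    ∀ i j : Fin n, i ≠ j →
      ‖α i j‖ ^ 2 ≤
        (Λ (Matrix.single i i 1) i i).re * (Λ (Matrix.single j j 1) j j).re := by
  intro i j hij
  simpa [hα i j hij] using hChoi.norm_apply_sq_le (i, i) (j, j)

/-- If a linear map `Λ` on `n×n` complex matrices has a positive semidefinite Choi matrix
and is block-diagonal with damping factors `α_{ij}` and transition probabilities
`p(i→j) = (Λ(E_{ii}))_{jj}`, then for all `i ≠ j` the coherences are damped at least by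
`√(p(i→i) p(j→j))`:  `|α_{ij}|² ≤ p(i→i) · p(j→j)`. -/
theorem damping_factor_bound (n : ℕ)
    (Λ : Matrix (Fin n) (Fin n) ℂ →ₗ[ℂ] Matrix (Fin n) (Fin n) ℂ)
    (hChoi : Matrix.PosSemidef (Matrix.of fun p q : Fin n × Fin n =>
      Λ (Matrix.single p.1 q.1 1) p.2 q.2))
    (α : Fin n → Fin n → ℂ)
    (hα : ∀ i j : Fin n, i ≠ j →
      Λ (Matrix.single i j 1) = α i j • Matrix.single i j 1)
    (hdiag : ∀ i : Fin n, (Λ (Matrix.single i i 1)).IsDiag) :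
    ∀ i j : Fin n, i ≠ j →
      ‖α i j‖ ^ 2 ≤
        (Λ (Matrix.single i i 1) i i).re * (Λ (Matrix.single j j 1) j j).re :=
  damping_factor_bound_general n Λ hChoi α hα
end

section
/- (Qubit second law for coherences.) Let β > 0, ΔE > 0, E = e^{β ΔE}. Let Λ be a linear map on 2×2 complex matrices whose Choi matrix is positive semidefinite, which is block-diagonal with Λ(E_{01}) = α_{01} • E_{01} and transition probabilities T_{ij} = p(i→j) (the (j,j) entry of Λ(E_{ii})), and which is Gibbs-stationary: E·T_{00} + T_{10} = E and E·T_{01} + T_{11} = 1. Let p ∈ [0,1], α ∈ ℂ, set ρ = [[p, α],[conj(α), 1−p]], and write Λ(ρ) = [[q, χ],[conj(χ), 1−q]]. If p ≠ (1−p)·E, then |χ| ≤ |α| · κ, where κ = √((q − (1−p)E)(p − (1−q)E)) / |p − (1−p)E|. -/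
open Matrix ComplexOrder

/-!
Expanding `ρ` in matrix units, a block-diagonal map sends the populations `(p, 1 - p)` to
`(q, 1 - q)` through the transition matrix `T` and multiplies the coherence by `a 0 1`, so
`χ = a 0 1 * α`. Positivity of the Choi matrix bounds its `2 × 2` minor on the indices
`(0,0), (1,1)`, giving `‖a 0 1‖² ≤ T 0 0 * T 1 1`. With `d = p - (1 - p) E`, Gibbs-stationarity
gives `q - (1 - p) E = T 0 0 * d` and `p - (1 - q) E = T 1 1 * d`, so `κ = √(T 0 0 * T 1 1)`.
-/

theorem Matrix.PosSemidef.norm_sq_apply_le {𝕜 n : Type*} [RCLike 𝕜] [Fintype n]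
    {M : Matrix n n 𝕜} (hM : M.PosSemidef) (s t : n) :
    ‖M s t‖ ^ 2 ≤ RCLike.re (M s s) * RCLike.re (M t t) := by
  have hdet := (RCLike.nonneg_iff.mp (hM.submatrix ![s, t]).det_nonneg).1
  have hts : M t s = star (M s t) := by rw [← hM.1.apply s t, star_star]
  simp only [det_fin_two, submatrix_apply, Matrix.cons_val_zero, Matrix.cons_val_one, hts,
    RCLike.star_def, RCLike.mul_conj] at hdet
  rw [← hM.1.coe_re_apply_self s, ← hM.1.coe_re_apply_self t] at hdet
  norm_cast at hdet
  linarith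

theorem norm_sq_apply_single_le_of_posSemidef_choi {𝕜 n : Type*} [RCLike 𝕜] [Fintype n]
    [DecidableEq n] {Λ : Matrix n n 𝕜 →ₗ[𝕜] Matrix n n 𝕜}
    (hChoi : (Matrix.of fun s t : n × n => Λ (Matrix.single s.1 t.1 1) s.2 t.2).PosSemidef)
    (i j : n) :
    ‖Λ (single i j 1) i j‖ ^ 2 ≤
      RCLike.re (Λ (single i i 1) i i) * RCLike.re (Λ (single j j 1) j j) :=
  hChoi.norm_sq_apply_le (i, i) (j, j)

theorem LinearMap.matrix_apply_eq_sum {R n : Type*} [CommSemiring R] [Fintype n] [DecidableEq n]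
    (Λ : Matrix n n R →ₗ[R] Matrix n n R) (M : Matrix n n R) (k l : n) :
    Λ M k l = ∑ i, ∑ j, M i j * Λ (Matrix.single i j 1) k l := by
  have hsingle : ∀ i j, Matrix.single i j (M i j) = M i j • Matrix.single i j 1 := by simp
  conv_lhs => rw [matrix_eq_sum_single M]
  simp only [map_sum, Matrix.sum_apply, hsingle, map_smul, Matrix.smul_apply, smul_eq_mul]

section BlockDiagonal

variable {R n : Type*} [CommSemiring R] [Fintype n] [DecidableEq n]
  {Λ : Matrix n n R →ₗ[R] Matrix n n R} {a : n → n → R}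

theorem apply_of_ne_of_blockDiagonal
    (ha : ∀ i j, i ≠ j → Λ (single i j 1) = a i j • single i j 1)
    (hdiag : ∀ i, (Λ (single i i 1)).IsDiag) (M : Matrix n n R) {k l : n} (hkl : k ≠ l) :
    Λ M k l = M k l * a k l := by
  rw [LinearMap.matrix_apply_eq_sum, Finset.sum_eq_single k, Finset.sum_eq_single l]
  · rw [ha k l hkl, Matrix.smul_apply, single_apply_same, smul_eq_mul, mul_one]
  · intro j _ hj
    obtain rfl | hkj := eq_or_ne k j
    · rw [hdiag k hkl, mul_zero]
    · rw [ha k j hkj, Matrix.smul_apply, single_apply_of_col_ne _ _ hj, smul_zero, mul_zero]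
  · simp
  · intro i _ hi
    refine Finset.sum_eq_zero fun j _ => ?_
    obtain rfl | hij := eq_or_ne i j
    · rw [hdiag i hkl, mul_zero]
    · rw [ha i j hij, Matrix.smul_apply, single_apply_of_row_ne hi, smul_zero, mul_zero]
  · simp

theorem apply_self_of_blockDiagonal
    (ha : ∀ i j, i ≠ j → Λ (single i j 1) = a i j • single i j 1) (M : Matrix n n R) (k : n) :
    Λ M k k = ∑ i, M i i * Λ (single i i 1) k k := by
  rw [LinearMap.matrix_apply_eq_sum]
  refine Finset.sum_congr rfl fun i _ => Finset.sum_eq_single i (fun j _ hji => ?_) (by simp)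
  obtain rfl | hik := eq_or_ne i k
  · rw [ha i j hji.symm, Matrix.smul_apply, single_apply_of_col_ne _ _ hji, smul_zero, mul_zero]
  · rw [ha i j hji.symm, Matrix.smul_apply, single_apply_of_row_ne hik, smul_zero, mul_zero]

end BlockDiagonal

/-- The contraction factor `κ` of the coherence, for Boltzmann factor `E` and populations
`p ↦ q`. -/
noncomputable def coherenceFactor (E p q : ℝ) : ℝ :=
  √((q - (1 - p) * E) * (p - (1 - q) * E)) / |p - (1 - p) * E|

theorem coherenceFactor_eq_sqrt_mul {E p q : ℝ} {T : Fin 2 → Fin 2 → ℝ}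
    (hgibbs0 : E * T 0 0 + T 1 0 = E) (hgibbs1 : E * T 0 1 + T 1 1 = 1)
    (hq0 : p * T 0 0 + (1 - p) * T 1 0 = q) (hq1 : p * T 0 1 + (1 - p) * T 1 1 = 1 - q)
    (hT00 : 0 ≤ T 0 0) (hT11 : 0 ≤ T 1 1) (hne : p ≠ (1 - p) * E) :
    coherenceFactor E p q = √(T 0 0 * T 1 1) := by
  have hd : p - (1 - p) * E ≠ 0 := sub_ne_zero.mpr hne
  have h0 : q - (1 - p) * E = T 0 0 * (p - (1 - p) * E) := by
    linear_combination (1 - p) * hgibbs0 - hq0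
  have h1 : p - (1 - q) * E = T 1 1 * (p - (1 - p) * E) := by
    linear_combination E * hq1 - p * hgibbs1
  rw [coherenceFactor, h0, h1, mul_mul_mul_comm, ← sq, Real.sqrt_mul (mul_nonneg hT00 hT11),
    Real.sqrt_sq_eq_abs, mul_div_assoc, div_self (abs_ne_zero.mpr hd), mul_one]

theorem qubit_coherence_second_law_general (β ΔE : ℝ)
    (Λ : Matrix (Fin 2) (Fin 2) ℂ →ₗ[ℂ] Matrix (Fin 2) (Fin 2) ℂ)
    (hChoi : Matrix.PosSemidef (Matrix.of fun s t : Fin 2 × Fin 2 =>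
      Λ (Matrix.single s.1 t.1 1) s.2 t.2))
    (a : Fin 2 → Fin 2 → ℂ)
    (ha : ∀ i j : Fin 2, i ≠ j →
      Λ (Matrix.single i j 1) = a i j • Matrix.single i j 1)
    (hdiag : ∀ i : Fin 2, (Λ (Matrix.single i i 1)).IsDiag)
    (T : Fin 2 → Fin 2 → ℝ)
    (hT : ∀ i j : Fin 2, Λ (Matrix.single i i 1) j j = ((T i j : ℝ) : ℂ))
    (hgibbs0 : Real.exp (β * ΔE) * T 0 0 + T 1 0 = Real.exp (β * ΔE))
    (hgibbs1 : Real.exp (β * ΔE) * T 0 1 + T 1 1 = 1)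
    (p : ℝ) (α : ℂ)
    (q : ℝ) (χ : ℂ)
    (hout : Λ !![((p : ℝ) : ℂ), α; (starRingEnd ℂ) α, 1 - ((p : ℝ) : ℂ)]
          = !![((q : ℝ) : ℂ), χ; (starRingEnd ℂ) χ, 1 - ((q : ℝ) : ℂ)])
    (hne : p ≠ (1 - p) * Real.exp (β * ΔE)) :
    ‖χ‖ ≤ ‖α‖ *
      (Real.sqrt ((q - (1 - p) * Real.exp (β * ΔE)) * (p - (1 - q) * Real.exp (β * ΔE))) /
        |p - (1 - p) * Real.exp (β * ΔE)|) := by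
  have hχ : χ = α * a 0 1 := by
    simpa [apply_of_ne_of_blockDiagonal ha hdiag _ zero_ne_one] using (congrFun₂ hout 0 1).symm
  have hq0 : p * T 0 0 + (1 - p) * T 1 0 = q := by
    have h := congrFun₂ hout 0 0
    rw [apply_self_of_blockDiagonal ha, Fin.sum_univ_two] at h
    simp only [hT, of_apply, cons_val', cons_val_zero, cons_val_one, empty_val',
      cons_val_fin_one] at h
    exact_mod_cast h
  have hq1 : p * T 0 1 + (1 - p) * T 1 1 = 1 - q := by
    have h := congrFun₂ hout 1 1
    rw [apply_self_of_blockDiagonal ha, Fin.sum_univ_two] at h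
    simp only [hT, of_apply, cons_val', cons_val_zero, cons_val_one, empty_val',
      cons_val_fin_one] at h
    exact_mod_cast h
  have hT_nonneg : ∀ i j, 0 ≤ T i j := fun i j => by
    simpa [hT] using hChoi.diag_nonneg (i := (i, j))
  have hcoh := norm_sq_apply_single_le_of_posSemidef_choi hChoi 0 1
  simp only [ha 0 1 zero_ne_one, hT, Matrix.smul_apply, single_apply_same, smul_eq_mul, mul_one] at hcoh
  calc ‖χ‖ = ‖α‖ * ‖a 0 1‖ := by rw [hχ, norm_mul]
    _ ≤ ‖α‖ * √(T 0 0 * T 1 1) := by gcongr; exact Real.le_sqrt_of_sq_le hcoh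
    _ = ‖α‖ * coherenceFactor (Real.exp (β * ΔE)) p q := by
      rw [coherenceFactor_eq_sqrt_mul hgibbs0 hgibbs1 hq0 hq1 (hT_nonneg 0 0) (hT_nonneg 1 1) hne]

/-- **Qubit second law for coherences.** Let `Λ` be a linear map on `2×2` complex
matrices with positive semidefinite Choi matrix, block-diagonal (with damping factors
`α_{ij}` and transition probabilities `T i j = (Λ(E_{ii}))_{jj}`), and Gibbs-stationary
(`E·T₀₀ + T₁₀ = E` and `E·T₀₁ + T₁₁ = 1` with `E = e^{βΔE}`).  If
`ρ = [[p, α],[α*, 1−p]]` and `Λ(ρ) = [[q, χ],[χ*, 1−q]]` with `p ≠ (1−p)E`, then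
`|χ| ≤ |α| · κ` where `κ = √((q − (1−p)E)(p − (1−q)E)) / |p − (1−p)E|`. -/
theorem qubit_coherence_second_law (β ΔE : ℝ) (hβ : 0 < β) (hΔE : 0 < ΔE)
    (Λ : Matrix (Fin 2) (Fin 2) ℂ →ₗ[ℂ] Matrix (Fin 2) (Fin 2) ℂ)
    (hChoi : Matrix.PosSemidef (Matrix.of fun s t : Fin 2 × Fin 2 =>
      Λ (Matrix.single s.1 t.1 1) s.2 t.2))
    (a : Fin 2 → Fin 2 → ℂ)
    (ha : ∀ i j : Fin 2, i ≠ j →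
      Λ (Matrix.single i j 1) = a i j • Matrix.single i j 1)
    (hdiag : ∀ i : Fin 2, (Λ (Matrix.single i i 1)).IsDiag)
    (T : Fin 2 → Fin 2 → ℝ)
    (hT : ∀ i j : Fin 2, Λ (Matrix.single i i 1) j j = ((T i j : ℝ) : ℂ))
    (hgibbs0 : Real.exp (β * ΔE) * T 0 0 + T 1 0 = Real.exp (β * ΔE))
    (hgibbs1 : Real.exp (β * ΔE) * T 0 1 + T 1 1 = 1)
    (p : ℝ) (hp : p ∈ Set.Icc (0 : ℝ) 1) (α : ℂ)
    (q : ℝ) (χ : ℂ)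
    (hout : Λ !![((p : ℝ) : ℂ), α; (starRingEnd ℂ) α, 1 - ((p : ℝ) : ℂ)]
          = !![((q : ℝ) : ℂ), χ; (starRingEnd ℂ) χ, 1 - ((q : ℝ) : ℂ)])
    (hne : p ≠ (1 - p) * Real.exp (β * ΔE)) :
    ‖χ‖ ≤ ‖α‖ *
      (Real.sqrt ((q - (1 - p) * Real.exp (β * ΔE)) * (p - (1 - q) * Real.exp (β * ΔE))) /
        |p - (1 - p) * Real.exp (β * ΔE)|) :=
  qubit_coherence_second_law_general β ΔE Λ hChoi a ha hdiag T hT hgibbs0 hgibbs1 p α q χ hout hne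
end

section
/- (von Neumann–Fan trace inequality.) Let X and Y be n×n complex matrices, and let σ₁(X) ≥ ⋯ ≥ σₙ(X) and σ₁(Y) ≥ ⋯ ≥ σₙ(Y) be their singular values in non-increasing order. Then for all n×n unitary matrices W and V, |tr(W X V Y)| ≤ Σᵢ σᵢ(X)·σᵢ(Y); moreover the supremum of |tr(W X V Y)| over all unitary W, V equals Σᵢ σᵢ(X)·σᵢ(Y). -/
/-!
Take singular value decompositions `X = U₁ Σ_X V₁` and `Y = U₂ Σ_Y V₂`; they come from the spectral
theorem: if `Q` is a unitary of eigenvectors of `Xᴴ X`, ordered so that `Xᴴ X = Q Σ_X² Qᴴ`, then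
`C = Σ_X Qᴴ` has `Cᴴ C = Xᴴ X`, so `C x ↦ X x` is an isometry on the range of `C`, which extends to
a unitary `U` with `X = U C`. By cyclicity of the trace,
`tr (W X V Y) = tr (A Σ_X B Σ_Y) = ∑ᵢ ∑ⱼ A i j σⱼ(X) B j i σᵢ(Y)` with `A = V₂ W U₁` and
`B = V₁ V U₂` unitary, and `A = B = 1` gives the value `∑ᵢ σᵢ(X) σᵢ(Y)`.

For the bound, the matrix `M i j = ‖A i j‖ ‖B j i‖` is doubly substochastic, since rows and columns
of a unitary matrix are unit vectors. For such `M` and non-increasing nonnegative `a`, `b`,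
`∑ᵢ ∑ⱼ bᵢ M i j aⱼ ≤ ∑ᵢ bᵢ aᵢ`: by Abel summation it suffices to compare partial sums, once in `i`
and once in `j`, and this reduces to the fact that the block `{i ≤ l, j ≤ k}` of `M` has total mass
at most `min k l + 1`.
-/

open Matrix ComplexOrder

section AbelSummation

open Finset

theorem dotProduct_nonneg_of_antitone_of_sum_Iic_nonneg {n : ℕ} {a z : Fin n → ℝ}
    (ha : Antitone a) (ha₀ : ∀ i, 0 ≤ a i) (hz : ∀ k, 0 ≤ ∑ i ∈ Iic k, z i) : 0 ≤ a ⬝ᵥ z := by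
  induction n with
  | zero => simp
  | succ n ih =>
    have hsplit : a ⬝ᵥ z =
        (fun i : Fin n => a i.castSucc - a (Fin.last n)) ⬝ᵥ (fun i => z i.castSucc) +
          a (Fin.last n) * ∑ i, z i := by
      simp only [dotProduct, Fin.sum_univ_castSucc, sub_mul, sum_sub_distrib, mul_add, mul_sum]
      ring
    rw [hsplit]
    refine add_nonneg (ih ?_ ?_ ?_) (mul_nonneg (ha₀ _) ?_)
    · exact fun i j hij => sub_le_sub_right (ha (Fin.castSucc_le_castSucc_iff.2 hij)) _
    · exact fun i => sub_nonneg.2 (ha (Fin.le_last _))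
    · exact fun k => by rw [← Fin.sum_Iic_castSucc]; exact hz _
    · simpa only [Iic_top] using hz ⊤

theorem dotProduct_le_dotProduct_of_antitone_of_sum_Iic_le {n : ℕ} {a x y : Fin n → ℝ}
    (ha : Antitone a) (ha₀ : ∀ i, 0 ≤ a i)
    (h : ∀ k, ∑ i ∈ Iic k, x i ≤ ∑ i ∈ Iic k, y i) : a ⬝ᵥ x ≤ a ⬝ᵥ y := by
  have := dotProduct_nonneg_of_antitone_of_sum_Iic_nonneg (z := y - x) ha ha₀
    fun k => by simpa [sum_sub_distrib] using h k
  rwa [dotProduct_sub, sub_nonneg] at this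

theorem Matrix.sum_sum_le_card_of_sum_col_le_one {m n : Type*} [Fintype m] {M : Matrix m n ℝ}
    (hM : ∀ i j, 0 ≤ M i j) (hcol : ∀ j, ∑ i, M i j ≤ 1) (s : Finset n) (t : Finset m) :
    ∑ j ∈ s, ∑ i ∈ t, M i j ≤ #s := by
  simpa using sum_le_sum fun j (_ : j ∈ s) =>
    (sum_le_univ_sum_of_nonneg fun i => hM i j).trans (hcol j)

theorem dotProduct_mulVec_le_dotProduct_of_antitone {n : ℕ} {M : Matrix (Fin n) (Fin n) ℝ}
    (hM : ∀ i j, 0 ≤ M i j) (hrow : ∀ i, ∑ j, M i j ≤ 1) (hcol : ∀ j, ∑ i, M i j ≤ 1)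
    {a b : Fin n → ℝ} (ha : Antitone a) (hb : Antitone b) (ha₀ : ∀ i, 0 ≤ a i)
    (hb₀ : ∀ i, 0 ≤ b i) : b ⬝ᵥ (M *ᵥ a) ≤ b ⬝ᵥ a := by
  refine dotProduct_le_dotProduct_of_antitone_of_sum_Iic_le hb hb₀ fun l => ?_
  have hlhs : ∑ i ∈ Iic l, (M *ᵥ a) i = a ⬝ᵥ fun j => ∑ i ∈ Iic l, M i j := by
    simp only [mulVec, dotProduct, mul_sum]
    rw [sum_comm]
    exact sum_congr rfl fun _ _ => sum_congr rfl fun _ _ => mul_comm _ _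
  have hrhs : ∑ i ∈ Iic l, a i = a ⬝ᵥ fun j => if j ≤ l then 1 else 0 := by
    simp_rw [dotProduct, mul_ite, mul_one, mul_zero]
    rw [← sum_filter, filter_ge_eq_Iic]
  rw [hlhs, hrhs]
  refine dotProduct_le_dotProduct_of_antitone_of_sum_Iic_le ha ha₀ fun k => ?_
  have hcard : ∑ j ∈ Iic k, (if j ≤ l then (1 : ℝ) else 0) = #(Iic (k ⊓ l)) := by
    rw [sum_boole, Nat.cast_inj]
    congr 1
    ext j
    simp [le_inf_iff]
  rw [hcard]
  rcases le_total k l with hkl | hlk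
  · rw [inf_eq_left.2 hkl]
    exact sum_sum_le_card_of_sum_col_le_one hM hcol _ _
  · rw [inf_eq_right.2 hlk, sum_comm]
    exact sum_sum_le_card_of_sum_col_le_one (M := Mᵀ) (fun i j => hM j i) hrow _ _

end AbelSummation

theorem LinearMap.exists_linearIsometry_apply_eq_of_norm_eq {𝕜 E F : Type*} [RCLike 𝕜]
    [AddCommGroup E] [Module 𝕜 E] [NormedAddCommGroup F] [InnerProductSpace 𝕜 F]
    [FiniteDimensional 𝕜 F] {f g : E →ₗ[𝕜] F} (h : ∀ x, ‖f x‖ = ‖g x‖) :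
    ∃ u : F →ₗᵢ[𝕜] F, ∀ x, u (g x) = f x := by
  have hker : ker g ≤ ker f := fun x hx => by
    rw [mem_ker, ← norm_eq_zero, h, norm_eq_zero]
    exact hx
  let f₀ : range g →ₗ[𝕜] F := ((ker g).liftQ f hker).comp g.quotKerEquivRange.symm.toLinearMap
  have hf₀ : ∀ x, f₀ ⟨g x, mem_range_self g x⟩ = f x := fun x => by
    simp [f₀, quotKerEquivRange_symm_apply_image]
  let L : range g →ₗᵢ[𝕜] F := ⟨f₀, by rintro ⟨-, x, rfl⟩; rw [hf₀]; exact h x⟩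
  exact ⟨L.extend, fun x => (L.extend_apply ⟨g x, mem_range_self g x⟩).trans (hf₀ x)⟩

namespace Matrix

variable {𝕜 : Type*} [RCLike 𝕜] {m n : Type*} [Fintype m] [DecidableEq m] [Fintype n]
  [DecidableEq n]

theorem sum_norm_sq_of_mem_unitaryGroup {U : Matrix n n 𝕜} (hU : U ∈ unitaryGroup n 𝕜) (i : n) :
    ∑ j, ‖U i j‖ ^ 2 = 1 := by
  have h : (U * Uᴴ) i i = 1 := by
    rw [← star_eq_conjTranspose, Unitary.mul_star_self_of_mem hU, one_apply_eq]
  simp only [mul_apply, conjTranspose_apply, RCLike.star_def, RCLike.mul_conj] at h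
  exact_mod_cast h

theorem sum_norm_mul_norm_le_one_of_mem_unitaryGroup {A B : Matrix n n 𝕜}
    (hA : A ∈ unitaryGroup n 𝕜) (hB : B ∈ unitaryGroup n 𝕜) (i : n) :
    ∑ j, ‖A i j‖ * ‖B j i‖ ≤ 1 := by
  have hBcol : ∑ j, ‖B j i‖ ^ 2 = 1 := by
    simpa using sum_norm_sq_of_mem_unitaryGroup (Unitary.star_mem hB) i
  calc ∑ j, ‖A i j‖ * ‖B j i‖ ≤ ∑ j, (‖A i j‖ ^ 2 + ‖B j i‖ ^ 2) / 2 :=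
        Finset.sum_le_sum fun j _ => by nlinarith [sq_nonneg (‖A i j‖ - ‖B j i‖)]
    _ = 1 := by
        rw [← Finset.sum_div, Finset.sum_add_distrib, sum_norm_sq_of_mem_unitaryGroup hA, hBcol]
        norm_num

theorem norm_trace_mul_diagonal_mul_diagonal_le {k : ℕ} {A B : Matrix (Fin k) (Fin k) 𝕜}
    (hA : A ∈ unitaryGroup (Fin k) 𝕜) (hB : B ∈ unitaryGroup (Fin k) 𝕜) {a b : Fin k → ℝ}
    (ha : Antitone a) (hb : Antitone b) (ha₀ : ∀ i, 0 ≤ a i) (hb₀ : ∀ i, 0 ≤ b i) :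
    ‖(A * diagonal (fun i => (a i : 𝕜)) * B * diagonal (fun i => (b i : 𝕜))).trace‖ ≤
      ∑ i, a i * b i := by
  set M : Matrix (Fin k) (Fin k) ℝ := of fun i j => ‖A i j‖ * ‖B j i‖
  calc _ = ‖∑ i, ∑ j, A i j * a j * B j i * b i‖ := by
        simp only [trace, diag_apply, mul_diagonal]
        simp only [mul_apply, diagonal_apply, mul_ite, mul_zero, Finset.sum_ite_eq',
          Finset.mem_univ, if_true, Finset.sum_mul]
    _ ≤ ∑ i, ∑ j, ‖A i j * a j * B j i * b i‖ :=
        (norm_sum_le _ _).trans (Finset.sum_le_sum fun i _ => norm_sum_le _ _)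
    _ = b ⬝ᵥ (M *ᵥ a) := by
        simp only [dotProduct, mulVec, M, of_apply, Finset.mul_sum, norm_mul, RCLike.norm_ofReal,
          abs_of_nonneg (ha₀ _), abs_of_nonneg (hb₀ _)]
        exact Finset.sum_congr rfl fun i _ => Finset.sum_congr rfl fun j _ => by ring
    _ ≤ b ⬝ᵥ a := by
        refine dotProduct_mulVec_le_dotProduct_of_antitone (fun i j => by positivity)
          (sum_norm_mul_norm_le_one_of_mem_unitaryGroup hA hB) (fun j => ?_) ha hb ha₀ hb₀
        simpa only [mul_comm ‖A _ j‖] using sum_norm_mul_norm_le_one_of_mem_unitaryGroup hB hA j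
    _ = ∑ i, a i * b i := dotProduct_comm b a

theorem toEuclideanLin_symm_mem_unitaryGroup
    (u : EuclideanSpace 𝕜 m →ₗᵢ[𝕜] EuclideanSpace 𝕜 m) :
    toEuclideanLin.symm u.toLinearMap ∈ unitaryGroup m 𝕜 := by
  rw [mem_unitaryGroup_iff', star_eq_conjTranspose]
  apply toEuclideanLin.injective
  rw [toLpLin_mul_same, toEuclideanLin_conjTranspose_eq_adjoint]
  simp

theorem exists_mem_unitaryGroup_eq_mul_of_conjTranspose_mul_self_eq {A B : Matrix m n 𝕜}
    (h : Aᴴ * A = Bᴴ * B) : ∃ U ∈ unitaryGroup m 𝕜, A = U * B := by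
  have hinner : ∀ (C : Matrix m n 𝕜) x, inner 𝕜 (toEuclideanLin C x) (toEuclideanLin C x) =
      inner 𝕜 x (toEuclideanLin (Cᴴ * C) x) := fun C x => by
    rw [toLpLin_mul_same, toEuclideanLin_conjTranspose_eq_adjoint, LinearMap.comp_apply,
      LinearMap.adjoint_inner_right]
  have hnorm : ∀ x, ‖toEuclideanLin A x‖ = ‖toEuclideanLin B x‖ := fun x => by
    rw [norm_eq_sqrt_re_inner (𝕜 := 𝕜), norm_eq_sqrt_re_inner (𝕜 := 𝕜), hinner, hinner, h]
  obtain ⟨u, hu⟩ := LinearMap.exists_linearIsometry_apply_eq_of_norm_eq hnorm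
  refine ⟨_, toEuclideanLin_symm_mem_unitaryGroup u, toEuclideanLin.injective ?_⟩
  ext1 x
  simp [toLpLin_mul_same, hu]

theorem submatrix_id_mem_unitaryGroup {U : Matrix n n 𝕜} (hU : U ∈ unitaryGroup n 𝕜)
    (e : Equiv.Perm n) : U.submatrix id e ∈ unitaryGroup n 𝕜 := by
  rw [mem_unitaryGroup_iff', star_eq_conjTranspose, conjTranspose_submatrix, ← Equiv.coe_refl,
    submatrix_mul_equiv, ← star_eq_conjTranspose, Unitary.star_mul_self_of_mem hU,
    submatrix_one_equiv]

theorem submatrix_id_mul_diagonal_mul_conjTranspose (U : Matrix n n 𝕜) (d : n → 𝕜)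
    (e : Equiv.Perm n) :
    U.submatrix id e * diagonal (d ∘ e) * (U.submatrix id e)ᴴ = U * diagonal d * Uᴴ := by
  rw [← submatrix_diagonal_equiv, conjTranspose_submatrix, submatrix_mul_equiv,
    submatrix_mul_equiv, submatrix_id_id]

theorem exists_eq_mul_diagonal_mul_of_sqrt_eigenvalues {X : Matrix n n 𝕜} {σ : n → ℝ}
    (hσ : ∃ e : Equiv.Perm n, ∀ i, σ i =
      √((posSemidef_conjTranspose_mul_self X).isHermitian.eigenvalues (e i))) :
    ∃ U ∈ unitaryGroup n 𝕜, ∃ V ∈ unitaryGroup n 𝕜,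
      X = U * diagonal (fun i => (σ i : 𝕜)) * V := by
  obtain ⟨e, he⟩ := hσ
  set hX := posSemidef_conjTranspose_mul_self X
  set W : Matrix n n 𝕜 := (hX.isHermitian.eigenvectorUnitary : Matrix n n 𝕜).submatrix id e
  have hW : W ∈ unitaryGroup n 𝕜 :=
    submatrix_id_mem_unitaryGroup hX.isHermitian.eigenvectorUnitary.2 e
  have hσ_sq : ∀ i, (σ i : 𝕜) * σ i = hX.isHermitian.eigenvalues (e i) := fun i => by
    rw [he i, ← RCLike.ofReal_mul, Real.mul_self_sqrt (hX.eigenvalues_nonneg _)]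
  have hstar : star (fun i => (σ i : 𝕜)) = fun i => (σ i : 𝕜) :=
    funext fun i => RCLike.conj_ofReal _
  have hXX : Xᴴ * X =
      (diagonal (fun i => (σ i : 𝕜)) * Wᴴ)ᴴ * (diagonal (fun i => (σ i : 𝕜)) * Wᴴ) := by
    rw [conjTranspose_mul, conjTranspose_conjTranspose, diagonal_conjTranspose, hstar,
      Matrix.mul_assoc, ← Matrix.mul_assoc (diagonal _), diagonal_mul_diagonal,
      ← Matrix.mul_assoc, funext hσ_sq]
    exact hX.isHermitian.spectral_theorem.trans
      (submatrix_id_mul_diagonal_mul_conjTranspose _ _ e).symm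
  obtain ⟨U, hU, hXU⟩ := exists_mem_unitaryGroup_eq_mul_of_conjTranspose_mul_self_eq hXX
  exact ⟨U, hU, Wᴴ, Unitary.star_mem hW, by rw [hXU, Matrix.mul_assoc]⟩

theorem mul_mul_star_mul_star_mul_eq_one {A B : Matrix n n 𝕜} (hA : A ∈ unitaryGroup n 𝕜)
    (hB : B ∈ unitaryGroup n 𝕜) : A * (star A * star B) * B = 1 := by
  rw [← Matrix.mul_assoc, Unitary.mul_star_self_of_mem hA, Matrix.one_mul,
    Unitary.star_mul_self_of_mem hB]

end Matrix

/-- **von Neumann–Fan trace inequality.** If `σX`, `σY` are the singular values of the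
`n×n` complex matrices `X`, `Y` in non-increasing order, then
`|tr(W X V Y)| ≤ ∑ᵢ σᵢ(X)σᵢ(Y)` for all unitaries `W, V`, and the supremum of
`|tr(W X V Y)|` over unitaries `W, V` equals `∑ᵢ σᵢ(X)σᵢ(Y)`. -/
theorem vonNeumann_fan_trace_inequality (n : ℕ) (X Y : Matrix (Fin n) (Fin n) ℂ)
    (σX σY : Fin n → ℝ) (hσXanti : Antitone σX) (hσYanti : Antitone σY)
    (hσX : ∃ e : Equiv.Perm (Fin n), ∀ i, σX i =
      Real.sqrt ((Matrix.posSemidef_conjTranspose_mul_self X).isHermitian.eigenvalues (e i)))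
    (hσY : ∃ e : Equiv.Perm (Fin n), ∀ i, σY i =
      Real.sqrt ((Matrix.posSemidef_conjTranspose_mul_self Y).isHermitian.eigenvalues (e i))) :
    (∀ W V : Matrix (Fin n) (Fin n) ℂ,
      W ∈ Matrix.unitaryGroup (Fin n) ℂ → V ∈ Matrix.unitaryGroup (Fin n) ℂ →
      ‖(W * X * V * Y).trace‖ ≤ ∑ i, σX i * σY i) ∧
    IsLUB {r : ℝ | ∃ W V : Matrix (Fin n) (Fin n) ℂ,
        W ∈ Matrix.unitaryGroup (Fin n) ℂ ∧ V ∈ Matrix.unitaryGroup (Fin n) ℂ ∧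
        r = ‖(W * X * V * Y).trace‖}
      (∑ i, σX i * σY i) := by
  have hσX₀ : ∀ i, 0 ≤ σX i := fun i => by obtain ⟨e, he⟩ := hσX; rw [he i]; positivity
  have hσY₀ : ∀ i, 0 ≤ σY i := fun i => by obtain ⟨e, he⟩ := hσY; rw [he i]; positivity
  obtain ⟨Ux, hUx, Vx, hVx, hX⟩ := exists_eq_mul_diagonal_mul_of_sqrt_eigenvalues hσX
  obtain ⟨Uy, hUy, Vy, hVy, hY⟩ := exists_eq_mul_diagonal_mul_of_sqrt_eigenvalues hσY
  have htrace : ∀ W V : Matrix (Fin n) (Fin n) ℂ, (W * X * V * Y).trace =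
      (Vy * W * Ux * diagonal (fun i => (σX i : ℂ)) * (Vx * V * Uy) *
        diagonal (fun i => (σY i : ℂ))).trace := fun W V => by
    rw [hX, hY, ← Matrix.mul_assoc, Matrix.trace_mul_comm]
    congr 1
    noncomm_ring
  have hbound : ∀ W V : Matrix (Fin n) (Fin n) ℂ,
      W ∈ unitaryGroup (Fin n) ℂ → V ∈ unitaryGroup (Fin n) ℂ →
      ‖(W * X * V * Y).trace‖ ≤ ∑ i, σX i * σY i := fun W V hW hV => by
    rw [htrace]
    exact norm_trace_mul_diagonal_mul_diagonal_le (mul_mem (mul_mem hVy hW) hUx)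
      (mul_mem (mul_mem hVx hV) hUy) hσXanti hσYanti hσX₀ hσY₀
  refine ⟨hbound, IsGreatest.isLUB ⟨⟨star Vy * star Ux, star Vx * star Uy,
    mul_mem (Unitary.star_mem hVy) (Unitary.star_mem hUx),
    mul_mem (Unitary.star_mem hVx) (Unitary.star_mem hUy), ?_⟩, ?_⟩⟩
  · rw [htrace, mul_mul_star_mul_star_mul_eq_one hVy hUx, mul_mul_star_mul_star_mul_eq_one hVx hUy,
      Matrix.one_mul, Matrix.mul_one, diagonal_mul_diagonal, trace_diagonal]
    norm_cast
    rw [Real.norm_of_nonneg (Finset.sum_nonneg fun i _ => mul_nonneg (hσX₀ i) (hσY₀ i))]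
  · rintro r ⟨W, V, hW, hV, rfl⟩
    exact hbound W V hW hV
end

section
/- Let d₂, d₁, d₀ ≥ 1 and let U be a unitary complex matrix of size (d₂+d₁+d₀)×(d₂+d₁+d₀), indexed by the disjoint sum Fin d₂ ⊕ Fin d₁ ⊕ Fin d₀, with 3×3 block decomposition U = [[u₂₂, u₂₁, u₂₀],[u₁₂, u₁₁, u₁₀],[u₀₂, u₀₁, u₀₀]] (row and column groups of sizes d₂, d₁, d₀ in this order). Suppose u₂₂ = 0, u₂₁ = 0, u₁₀ = 0 and u₀₂ = 0. Then u₁₁ᴴ u₁₁ and u₀₀ᴴ u₀₀ are idempotent matrices (orthogonal projections); equivalently, every singular value of u₁₁ and of u₀₀ is either 0 or 1. -/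
open Matrix

/-- For a unitary matrix `U` indexed by `Fin d₂ ⊕ Fin d₁ ⊕ Fin d₀` whose blocks satisfy
the quasi-cycle zero pattern `u₂₂ = u₂₁ = u₁₀ = u₀₂ = 0`, the diagonal blocks
`u₁₁` and `u₀₀` have `u₁₁ᴴu₁₁` and `u₀₀ᴴu₀₀` idempotent (orthogonal projections);
equivalently all their singular values are `0` or `1`. -/
theorem quasi_cycle_unitary_blocks_partial_isometries (d2 d1 d0 : ℕ)
    (hd2 : 1 ≤ d2) (hd1 : 1 ≤ d1) (hd0 : 1 ≤ d0)
    (U : Matrix (Fin d2 ⊕ Fin d1 ⊕ Fin d0) (Fin d2 ⊕ Fin d1 ⊕ Fin d0) ℂ)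
    (hU : U ∈ Matrix.unitaryGroup (Fin d2 ⊕ Fin d1 ⊕ Fin d0) ℂ)
    (u11 : Matrix (Fin d1) (Fin d1) ℂ)
    (hu11 : u11 = Matrix.of fun i j => U (Sum.inr (Sum.inl i)) (Sum.inr (Sum.inl j)))
    (u00 : Matrix (Fin d0) (Fin d0) ℂ)
    (hu00 : u00 = Matrix.of fun i j => U (Sum.inr (Sum.inr i)) (Sum.inr (Sum.inr j)))
    (h22 : ∀ (i : Fin d2) (j : Fin d2), U (Sum.inl i) (Sum.inl j) = 0)
    (h21 : ∀ (i : Fin d2) (j : Fin d1), U (Sum.inl i) (Sum.inr (Sum.inl j)) = 0)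
    (h10 : ∀ (i : Fin d1) (j : Fin d0), U (Sum.inr (Sum.inl i)) (Sum.inr (Sum.inr j)) = 0)
    (h02 : ∀ (i : Fin d0) (j : Fin d2), U (Sum.inr (Sum.inr i)) (Sum.inl j) = 0) :
    (u11ᴴ * u11) * (u11ᴴ * u11) = u11ᴴ * u11 ∧
    (u00ᴴ * u00) * (u00ᴴ * u00) = u00ᴴ * u00 := by
  have hUU : U * star U = 1 := hU.2
  have hsUU : star U * U = 1 := hU.1
  set u12 : Matrix (Fin d1) (Fin d2) ℂ :=
    Matrix.of (fun i j => U (Sum.inr (Sum.inl i)) (Sum.inl j)) with hu12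
  set u01 : Matrix (Fin d0) (Fin d1) ℂ :=
    Matrix.of (fun i j => U (Sum.inr (Sum.inr i)) (Sum.inr (Sum.inl j))) with hu01
  -- row 1 orthonormality
  have h1 : u11 * u11ᴴ + u12 * u12ᴴ = 1 := by
    ext i j
    have h := congrFun (congrFun hUU (Sum.inr (Sum.inl i))) (Sum.inr (Sum.inl j))
    simp only [Matrix.mul_apply, Matrix.star_apply, Fintype.sum_sum_type, h10,
      mul_zero, zero_mul, star_zero, Finset.sum_const_zero, add_zero, Matrix.one_apply,
      Sum.inr.injEq, Sum.inl.injEq] at h ⊢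
    simp only [Matrix.add_apply, Matrix.mul_apply, Matrix.conjTranspose_apply,
      Matrix.one_apply, hu11, hu12, Matrix.of_apply, Matrix.star_apply]
    rw [← h]
    ring
  have h2 : u12ᴴ * u11 = 0 := by
    ext a j
    have h := congrFun (congrFun hsUU (Sum.inl a)) (Sum.inr (Sum.inl j))
    simp only [Matrix.mul_apply, Matrix.star_apply, Fintype.sum_sum_type, h22, h02,
      star_zero, zero_mul, Finset.sum_const_zero, zero_add, add_zero, Matrix.one_apply,
      reduceCtorEq, if_false] at h
    simp only [Matrix.mul_apply, Matrix.conjTranspose_apply, Matrix.zero_apply,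
      hu11, hu12, Matrix.of_apply, Matrix.star_apply]
    rw [← h]
  -- row 0 orthonormality
  have h3 : u00 * u00ᴴ + u01 * u01ᴴ = 1 := by
    ext i j
    have h := congrFun (congrFun hUU (Sum.inr (Sum.inr i))) (Sum.inr (Sum.inr j))
    simp only [Matrix.mul_apply, Matrix.star_apply, Fintype.sum_sum_type, h02,
      mul_zero, zero_mul, star_zero, Finset.sum_const_zero, zero_add, Matrix.one_apply,
      Sum.inr.injEq] at h ⊢
    simp only [Matrix.add_apply, Matrix.mul_apply, Matrix.conjTranspose_apply,
      Matrix.one_apply, hu00, hu01, Matrix.of_apply, Matrix.star_apply]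
    rw [← h]
    ring
  have h4 : u01ᴴ * u00 = 0 := by
    ext a j
    have h := congrFun (congrFun hsUU (Sum.inr (Sum.inl a))) (Sum.inr (Sum.inr j))
    simp only [Matrix.mul_apply, Matrix.star_apply, Fintype.sum_sum_type, h21, h10,
      star_zero, zero_mul, mul_zero, Finset.sum_const_zero, zero_add, add_zero,
      Matrix.one_apply, Sum.inr.injEq, reduceCtorEq, if_false] at h
    simp only [Matrix.mul_apply, Matrix.conjTranspose_apply, Matrix.zero_apply,
      hu00, hu01, Matrix.of_apply, Matrix.star_apply]
    rw [← h]
  have e1 : u11 * u11ᴴ = 1 - u12 * u12ᴴ := eq_sub_of_add_eq h1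
  have e3 : u00 * u00ᴴ = 1 - u01 * u01ᴴ := eq_sub_of_add_eq h3
  constructor
  · calc (u11ᴴ * u11) * (u11ᴴ * u11) = u11ᴴ * (u11 * u11ᴴ) * u11 := by noncomm_ring
      _ = u11ᴴ * (1 - u12 * u12ᴴ) * u11 := by rw [e1]
      _ = u11ᴴ * u11 - u11ᴴ * (u12 * u12ᴴ * u11) := by noncomm_ring
      _ = u11ᴴ * u11 := by rw [Matrix.mul_assoc u12 u12ᴴ u11, h2, Matrix.mul_zero, Matrix.mul_zero, sub_zero]
  · calc (u00ᴴ * u00) * (u00ᴴ * u00) = u00ᴴ * (u00 * u00ᴴ) * u00 := by noncomm_ring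
      _ = u00ᴴ * (1 - u01 * u01ᴴ) * u00 := by rw [e3]
      _ = u00ᴴ * u00 - u00ᴴ * (u01 * u01ᴴ * u00) := by noncomm_ring
      _ = u00ᴴ * u00 := by rw [Matrix.mul_assoc u01 u01ᴴ u00, h4, Matrix.mul_zero, Matrix.mul_zero, sub_zero]
end

section
/- (No-go for saturating the coherence bound in the qutrit quasi-cycle.) Let U and U′ be unitary complex matrices with 3×3 block decompositions as follows: U is indexed by Fin d₂ ⊕ Fin d₁ ⊕ Fin d₀ with blocks u_{ab}, and U′ is indexed by Fin d₂′ ⊕ Fin d₁′ ⊕ Fin d₀′ with blocks u′_{ab}, and both satisfy the zero-block pattern u₂₂ = u₂₁ = u₁₀ = u₀₂ = 0 (respectively u′₂₂ = u′₂₁ = u′₁₀ = u′₀₂ = 0). Suppose d₀ = d₁′, so that A := u₀₀ and B := u′₁₁ are square matrices of the same size. If A ≠ 0, B ≠ 0 and tr(A Aᴴ) ≠ tr(B Bᴴ), then |tr(A Bᴴ)| < √(tr(A Aᴴ) · tr(B Bᴴ)); i.e. the Cauchy–Schwarz bound for the coherence damping factor cannot be saturated. -/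
open Matrix

/-! Row 2 of `U` is supported in column 0 and column 0 in rows 2 and 0, so unitarity gives
`u₂₀ u₂₀ᴴ = 1` and `u₀₀ᴴ u₀₀ = 1 - u₂₀ᴴ u₂₀`: the latter is a projection, i.e. `A = u₀₀` is a
partial isometry. The same argument applied to `U'ᴴ` shows that `Bᴴ`, hence `B`, is one.
Equality in Cauchy–Schwarz for the Frobenius inner product `tr(A Bᴴ)` would force `A = r • B`,
and a nonzero multiple `r • B` of a partial isometry is again one only if `|r| = 1`, which
would give `tr(A Aᴴ) = tr(B Bᴴ)`. -/

namespace Matrix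

variable {m n ι κ α R 𝕜 : Type*}

def IsPartialIsometry [Fintype m] [Fintype n] [NonUnitalNonAssocSemiring R] [Star R]
    (A : Matrix m n R) : Prop :=
  A * Aᴴ * A = A

theorem IsPartialIsometry.of_isIdempotentElem [Fintype m] [Fintype n] [DecidableEq n] [Ring R]
    [StarRing R] [PartialOrder R] [StarOrderedRing R] [NoZeroDivisors R] {A : Matrix m n R}
    (h : IsIdempotentElem (Aᴴ * A)) : IsPartialIsometry A := by
  have hP : Aᴴ * A * (Aᴴ * A - 1) = 0 := by rw [Matrix.mul_sub, h.eq, Matrix.mul_one, sub_self]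
  have hsq : (A * (Aᴴ * A - 1))ᴴ * (A * (Aᴴ * A - 1)) = 0 := by
    rw [conjTranspose_mul, Matrix.mul_assoc, ← Matrix.mul_assoc Aᴴ, hP, Matrix.mul_zero]
  have hzero : A * (Aᴴ * A - 1) = 0 := conjTranspose_mul_self_eq_zero.mp hsq
  rwa [Matrix.mul_sub, Matrix.mul_one, ← Matrix.mul_assoc, sub_eq_zero] at hzero

theorem IsPartialIsometry.conjTranspose [Fintype m] [Fintype n] [Semiring R] [StarRing R]
    {A : Matrix m n R} (h : IsPartialIsometry A) : IsPartialIsometry Aᴴ := by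
  unfold IsPartialIsometry at h ⊢
  conv_rhs => rw [← h]
  simp only [conjTranspose_mul, conjTranspose_conjTranspose, Matrix.mul_assoc]

theorem submatrix_mul_conjTranspose_eq_one [Fintype n] [Fintype κ] [Semiring R] [StarRing R]
    [DecidableEq m] [DecidableEq ι] {U : Matrix m n R} (hU : U * Uᴴ = 1) {r : ι → m} {c : κ → n}
    (hr : r.Injective) (hc : c.Injective) (hsupp : ∀ i j, j ∉ Set.range c → U (r i) j = 0) :
    U.submatrix r c * (U.submatrix r c)ᴴ = 1 := by
  calc U.submatrix r c * (U.submatrix r c)ᴴ = (U * Uᴴ).submatrix r r := by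
        ext i i'
        exact Fintype.sum_of_injective c hc _ _ (fun j hj => by simp [hsupp i j hj]) fun _ => rfl
    _ = 1 := by rw [hU, submatrix_one _ hr]

open scoped ComplexOrder in
theorem IsPartialIsometry.submatrix_of_mem_unitaryGroup [Fintype n] [DecidableEq n] [Fintype ι]
    [Fintype κ] [Fintype α] [RCLike 𝕜] {U : Matrix n n 𝕜} (hU : U ∈ unitaryGroup n 𝕜)
    {r : ι → n} {c : κ → n} {a : α → n}
    (hc : c.Injective) (hra : (Sum.elim r a).Injective)
    (hrow : ∀ i j, j ∉ Set.range c → U (r i) j = 0)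
    (hcol : ∀ i j, i ∉ Set.range (Sum.elim r a) → U i (c j) = 0) :
    IsPartialIsometry (U.submatrix a c) := by
  classical
  set C := U.submatrix r c
  have hC : C * Cᴴ = 1 := submatrix_mul_conjTranspose_eq_one (Unitary.mul_star_self_of_mem hU)
    (hra.comp Sum.inl_injective) hc hrow
  have hcols : Uᴴ.submatrix c (Sum.elim r a) * (Uᴴ.submatrix c (Sum.elim r a))ᴴ = 1 := by
    refine submatrix_mul_conjTranspose_eq_one ?_ hc hra fun j i hi => ?_
    · simpa [star_eq_conjTranspose] using Unitary.star_mul_self_of_mem hU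
    · simp [hcol i j hi]
  have hsplit : Uᴴ.submatrix c (Sum.elim r a) = fromCols Cᴴ (U.submatrix a c)ᴴ := by
    ext j (i | i) <;> rfl
  rw [hsplit, conjTranspose_fromCols_eq_fromRows_conjTranspose, fromCols_mul_fromRows,
    conjTranspose_conjTranspose, conjTranspose_conjTranspose, ← eq_sub_iff_add_eq'] at hcols
  refine .of_isIdempotentElem ?_
  rw [hcols]
  refine IsIdempotentElem.one_sub ?_
  rw [IsIdempotentElem, Matrix.mul_assoc, ← Matrix.mul_assoc C, hC, Matrix.one_mul]

section Frobenius

variable [RCLike 𝕜]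

noncomputable def frobeniusVec : Matrix m n 𝕜 ≃ₗ[𝕜] EuclideanSpace 𝕜 (m × n) :=
  (LinearEquiv.curry 𝕜 𝕜 m n).symm.trans (WithLp.linearEquiv 2 𝕜 _).symm

@[simp]
theorem frobeniusVec_apply (A : Matrix m n 𝕜) (p : m × n) : frobeniusVec A p = A p.1 p.2 :=
  rfl

variable [Fintype m] [Fintype n]

theorem trace_mul_conjTranspose_eq_inner (A B : Matrix m n 𝕜) :
    (A * Bᴴ).trace = inner 𝕜 (frobeniusVec B) (frobeniusVec A) := by
  simp [Matrix.trace, Matrix.mul_apply, PiLp.inner_apply, Fintype.sum_prod_type]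

theorem re_trace_mul_conjTranspose_self (A : Matrix m n 𝕜) :
    RCLike.re (A * Aᴴ).trace = ‖frobeniusVec A‖ ^ 2 := by
  rw [trace_mul_conjTranspose_eq_inner, inner_self_eq_norm_sq]

theorem IsPartialIsometry.trace_mul_conjTranspose_eq_of_eq_smul {A B : Matrix m n 𝕜}
    (hA : IsPartialIsometry A) (hB : IsPartialIsometry B) (hA0 : A ≠ 0) {r : 𝕜}
    (hAB : A = r • B) : (A * Aᴴ).trace = (B * Bᴴ).trace := by
  subst hAB
  have hr : r ≠ 0 := left_ne_zero_of_smul hA0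
  have hB0 : B ≠ 0 := right_ne_zero_of_smul hA0
  have hcube : (r * star r * r) • B = r • B := by
    conv_rhs => rw [← hA]
    simp only [conjTranspose_smul, Matrix.smul_mul, Matrix.mul_smul, smul_smul]
    rw [hB, mul_assoc]
  have hnorm : r * star r = 1 := (mul_eq_right₀ hr).mp (smul_left_injective 𝕜 hB0 hcube)
  rw [conjTranspose_smul, Matrix.smul_mul, Matrix.mul_smul, smul_smul, hnorm, one_smul]

theorem IsPartialIsometry.norm_trace_mul_conjTranspose_lt {A B : Matrix m n 𝕜}
    (hA : IsPartialIsometry A) (hB : IsPartialIsometry B) (hA0 : A ≠ 0) (hB0 : B ≠ 0)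
    (htr : (A * Aᴴ).trace ≠ (B * Bᴴ).trace) :
    ‖(A * Bᴴ).trace‖ < √(RCLike.re (A * Aᴴ).trace * RCLike.re (B * Bᴴ).trace) := by
  set x := frobeniusVec A
  set y := frobeniusVec B
  have hx : x ≠ 0 := (map_ne_zero_iff _ frobeniusVec.injective).mpr hA0
  have hy : y ≠ 0 := (map_ne_zero_iff _ frobeniusVec.injective).mpr hB0
  rw [re_trace_mul_conjTranspose_self, re_trace_mul_conjTranspose_self, ← mul_pow,
    Real.sqrt_sq (by positivity), trace_mul_conjTranspose_eq_inner, mul_comm]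
  refine (norm_inner_le_norm y x).lt_of_ne fun heq => htr ?_
  obtain ⟨r, -, hxy⟩ := (norm_inner_eq_norm_iff hy hx).mp heq
  exact hA.trace_mul_conjTranspose_eq_of_eq_smul hB hA0 (r := r)
    (frobeniusVec.injective (by rwa [map_smul]))

end Frobenius

end Matrix

theorem quasi_cycle_no_saturation_general (d2 d1 d0 d2' d0' : ℕ)
    (U : Matrix (Fin d2 ⊕ Fin d1 ⊕ Fin d0) (Fin d2 ⊕ Fin d1 ⊕ Fin d0) ℂ)
    (hU : U ∈ Matrix.unitaryGroup (Fin d2 ⊕ Fin d1 ⊕ Fin d0) ℂ)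
    (U' : Matrix (Fin d2' ⊕ Fin d0 ⊕ Fin d0') (Fin d2' ⊕ Fin d0 ⊕ Fin d0') ℂ)
    (hU' : U' ∈ Matrix.unitaryGroup (Fin d2' ⊕ Fin d0 ⊕ Fin d0') ℂ)
    (h22 : ∀ (i : Fin d2) (j : Fin d2), U (Sum.inl i) (Sum.inl j) = 0)
    (h21 : ∀ (i : Fin d2) (j : Fin d1), U (Sum.inl i) (Sum.inr (Sum.inl j)) = 0)
    (h10 : ∀ (i : Fin d1) (j : Fin d0), U (Sum.inr (Sum.inl i)) (Sum.inr (Sum.inr j)) = 0)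
    (h22' : ∀ (i : Fin d2') (j : Fin d2'), U' (Sum.inl i) (Sum.inl j) = 0)
    (h10' : ∀ (i : Fin d0) (j : Fin d0'), U' (Sum.inr (Sum.inl i)) (Sum.inr (Sum.inr j)) = 0)
    (h02' : ∀ (i : Fin d0') (j : Fin d2'), U' (Sum.inr (Sum.inr i)) (Sum.inl j) = 0)
    (A : Matrix (Fin d0) (Fin d0) ℂ)
    (hA : A = Matrix.of fun i j => U (Sum.inr (Sum.inr i)) (Sum.inr (Sum.inr j)))
    (B : Matrix (Fin d0) (Fin d0) ℂ)
    (hB : B = Matrix.of fun i j => U' (Sum.inr (Sum.inl i)) (Sum.inr (Sum.inl j)))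
    (hA0 : A ≠ 0) (hB0 : B ≠ 0)
    (htr : (A * Aᴴ).trace ≠ (B * Bᴴ).trace) :
    ‖(A * Bᴴ).trace‖ <
      Real.sqrt (((A * Aᴴ).trace).re * ((B * Bᴴ).trace).re) := by
  have hAiso : IsPartialIsometry A := by
    subst hA
    refine IsPartialIsometry.submatrix_of_mem_unitaryGroup hU (r := Sum.inl)
      (Sum.inr_injective.comp Sum.inr_injective)
      (Sum.inl_injective.sumElim (Sum.inr_injective.comp Sum.inr_injective) (by simp)) ?_ ?_
    · rintro i (j | j | j) hj
      exacts [h22 i j, h21 i j, absurd ⟨j, rfl⟩ hj]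
    · rintro (i | i | i) j hi
      exacts [absurd ⟨.inl i, rfl⟩ hi, h10 i j, absurd ⟨.inr i, rfl⟩ hi]
  have hBiso' : IsPartialIsometry Bᴴ := by
    subst hB
    refine IsPartialIsometry.submatrix_of_mem_unitaryGroup (Unitary.star_mem hU')
      (r := Sum.inl)
      (Sum.inr_injective.comp Sum.inl_injective)
      (Sum.inl_injective.sumElim (Sum.inr_injective.comp Sum.inl_injective) (by simp)) ?_ ?_
    · rintro i (j | j | j) hj
      exacts [by simp [h22' j i], absurd ⟨j, rfl⟩ hj, by simp [h02' j i]]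
    · rintro (i | i | i) j hi
      exacts [absurd ⟨.inl i, rfl⟩ hi, absurd ⟨.inr i, rfl⟩ hi, by simp [h10' j i]]
  have hBiso : IsPartialIsometry B := by simpa using hBiso'.conjTranspose
  simpa using hAiso.norm_trace_mul_conjTranspose_lt hBiso hA0 hB0 htr

/-- **No-go for saturating the coherence bound in the qutrit quasi-cycle.**
Let `U` and `U'` be unitaries with the quasi-cycle zero-block pattern
`u₂₂ = u₂₁ = u₁₀ = u₀₂ = 0`, where `U` is indexed by `Fin d₂ ⊕ Fin d₁ ⊕ Fin d₀` and
`U'` by `Fin d₂' ⊕ Fin d₁' ⊕ Fin d₀'` with `d₁' = d₀`. With `A = u₀₀` (block of `U`) and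
`B = u'₁₁` (block of `U'`), if `A ≠ 0`, `B ≠ 0` and `tr(AAᴴ) ≠ tr(BBᴴ)`, then
`|tr(ABᴴ)| < √(tr(AAᴴ)·tr(BBᴴ))`: the Cauchy–Schwarz bound cannot be saturated. -/
theorem quasi_cycle_no_saturation (d2 d1 d0 d2' d0' : ℕ)
    (hd2 : 1 ≤ d2) (hd1 : 1 ≤ d1) (hd0 : 1 ≤ d0) (hd2' : 1 ≤ d2') (hd0' : 1 ≤ d0')
    (U : Matrix (Fin d2 ⊕ Fin d1 ⊕ Fin d0) (Fin d2 ⊕ Fin d1 ⊕ Fin d0) ℂ)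
    (hU : U ∈ Matrix.unitaryGroup (Fin d2 ⊕ Fin d1 ⊕ Fin d0) ℂ)
    (U' : Matrix (Fin d2' ⊕ Fin d0 ⊕ Fin d0') (Fin d2' ⊕ Fin d0 ⊕ Fin d0') ℂ)
    (hU' : U' ∈ Matrix.unitaryGroup (Fin d2' ⊕ Fin d0 ⊕ Fin d0') ℂ)
    (h22 : ∀ (i : Fin d2) (j : Fin d2), U (Sum.inl i) (Sum.inl j) = 0)
    (h21 : ∀ (i : Fin d2) (j : Fin d1), U (Sum.inl i) (Sum.inr (Sum.inl j)) = 0)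
    (h10 : ∀ (i : Fin d1) (j : Fin d0), U (Sum.inr (Sum.inl i)) (Sum.inr (Sum.inr j)) = 0)
    (h02 : ∀ (i : Fin d0) (j : Fin d2), U (Sum.inr (Sum.inr i)) (Sum.inl j) = 0)
    (h22' : ∀ (i : Fin d2') (j : Fin d2'), U' (Sum.inl i) (Sum.inl j) = 0)
    (h21' : ∀ (i : Fin d2') (j : Fin d0), U' (Sum.inl i) (Sum.inr (Sum.inl j)) = 0)
    (h10' : ∀ (i : Fin d0) (j : Fin d0'), U' (Sum.inr (Sum.inl i)) (Sum.inr (Sum.inr j)) = 0)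
    (h02' : ∀ (i : Fin d0') (j : Fin d2'), U' (Sum.inr (Sum.inr i)) (Sum.inl j) = 0)
    (A : Matrix (Fin d0) (Fin d0) ℂ)
    (hA : A = Matrix.of fun i j => U (Sum.inr (Sum.inr i)) (Sum.inr (Sum.inr j)))
    (B : Matrix (Fin d0) (Fin d0) ℂ)
    (hB : B = Matrix.of fun i j => U' (Sum.inr (Sum.inl i)) (Sum.inr (Sum.inl j)))
    (hA0 : A ≠ 0) (hB0 : B ≠ 0)
    (htr : (A * Aᴴ).trace ≠ (B * Bᴴ).trace) :
    ‖(A * Bᴴ).trace‖ <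
      Real.sqrt (((A * Aᴴ).trace).re * ((B * Bᴴ).trace).re) :=
  quasi_cycle_no_saturation_general d2 d1 d0 d2' d0' U hU U' hU' h22 h21 h10 h22' h10' h02' A hA B
    hB hA0 hB0 htr
end
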